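/- Every proof in LNGL can be transformed into a proof in normal form of the same linear nested sequent. -/
import Mathlib


/-- Modal formulas built from propositional atoms with ¬, ∨, □. -/
inductive Fml : Type
  | atom : ℕ → Fml
  | neg : Fml → Fml
  | or : Fml → Fml → Fml
  | box : Fml → Fml
  deriving DecidableEq

/-- Implication φ → ψ abbreviates ¬φ ∨ ψ. -/
def Fml.imp (φ ψ : Fml) : Fml := .or (.neg φ) ψ

/-- Conjunction φ ∧ ψ abbreviates ¬(¬φ ∨ ¬ψ). -/
def Fml.and (φ ψ : Fml) : Fml := .neg (.or (.neg φ) (.neg ψ))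

/-- A linear nested sequent: a list of components Γ ⊢ Δ. -/
abbrev LNS := List (Multiset Fml × Multiset Fml)

/-- The linear nested sequent calculus LNGL, indexed by height:
`LNGL n S` means S has an LNGL proof of height at most n. -/
inductive LNGL : ℕ → LNS → Prop
  | id1 (n : ℕ) (G : LNS) (Γ Δ : Multiset Fml) (p : ℕ) :
      LNGL n (G ++ [(Fml.atom p ::ₘ Γ, Fml.atom p ::ₘ Δ)])
  | id2 (n : ℕ) (G : LNS) (Γ Δ : Multiset Fml) (φ : Fml) :
      LNGL n (G ++ [(Fml.box φ ::ₘ Γ, Fml.box φ ::ₘ Δ)])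
  | negL {n : ℕ} {G : LNS} {Γ Δ : Multiset Fml} {φ : Fml} :
      LNGL n (G ++ [(Γ, φ ::ₘ Δ)]) → LNGL (n + 1) (G ++ [(Fml.neg φ ::ₘ Γ, Δ)])
  | negR {n : ℕ} {G : LNS} {Γ Δ : Multiset Fml} {φ : Fml} :
      LNGL n (G ++ [(φ ::ₘ Γ, Δ)]) → LNGL (n + 1) (G ++ [(Γ, Fml.neg φ ::ₘ Δ)])
  | orL {n : ℕ} {G : LNS} {Γ Δ : Multiset Fml} {φ ψ : Fml} :
      LNGL n (G ++ [(φ ::ₘ Γ, Δ)]) → LNGL n (G ++ [(ψ ::ₘ Γ, Δ)]) →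
      LNGL (n + 1) (G ++ [(Fml.or φ ψ ::ₘ Γ, Δ)])
  | orR {n : ℕ} {G : LNS} {Γ Δ : Multiset Fml} {φ ψ : Fml} :
      LNGL n (G ++ [(Γ, φ ::ₘ ψ ::ₘ Δ)]) → LNGL (n + 1) (G ++ [(Γ, Fml.or φ ψ ::ₘ Δ)])
  | fourL {n : ℕ} {G : LNS} {Γ Δ Ξ Ω : Multiset Fml} {φ : Fml} :
      LNGL n (G ++ [(Fml.box φ ::ₘ Γ, Δ), (Fml.box φ ::ₘ Ξ, Ω)]) →
      LNGL (n + 1) (G ++ [(Fml.box φ ::ₘ Γ, Δ), (Ξ, Ω)])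
  | boxL {n : ℕ} {G : LNS} {Γ Δ Ξ Ω : Multiset Fml} {φ : Fml} :
      LNGL n (G ++ [(Fml.box φ ::ₘ Γ, Δ), (φ ::ₘ Ξ, Ω)]) →
      LNGL (n + 1) (G ++ [(Fml.box φ ::ₘ Γ, Δ), (Ξ, Ω)])
  | boxR {n : ℕ} {G : LNS} {Γ Δ : Multiset Fml} {φ : Fml} :
      LNGL n (G ++ [(Γ, Δ), ({Fml.box φ}, {φ})]) →
      LNGL (n + 1) (G ++ [(Γ, Fml.box φ ::ₘ Δ)])

/-- Provability in LNGL (at some height). -/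
def LNGLProv (S : LNS) : Prop := ∃ n, LNGL n S

/- Normal-form provability in LNGL:  each bottom-up □R application is derived
from a block of 4L rules (NF4), whose premise is derived from a block of □L
rules (NFboxL), whose premise is derived from a block of local rules (NFloc),
whose premises are initial sequents or conclusions of □R (NFR). -/
mutual
  /-- Initial sequents and conclusions of □R applications in a normal form
  proof. -/
  inductive NFR : LNS → Prop
    | id1 (G : LNS) (Γ Δ : Multiset Fml) (p : ℕ) :
        NFR (G ++ [(Fml.atom p ::ₘ Γ, Fml.atom p ::ₘ Δ)])
    | id2 (G : LNS) (Γ Δ : Multiset Fml) (φ : Fml) :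
        NFR (G ++ [(Fml.box φ ::ₘ Γ, Fml.box φ ::ₘ Δ)])
    | boxR {G : LNS} {Γ Δ : Multiset Fml} {φ : Fml} :
        NF4 (G ++ [(Γ, Δ), ({Fml.box φ}, {φ})]) →
        NFR (G ++ [(Γ, Fml.box φ ::ₘ Δ)])

  /-- Conclusions of blocks of local rules above initial sequents/□R. -/
  inductive NFloc : LNS → Prop
    | base {S : LNS} : NFR S → NFloc S
    | negL {G : LNS} {Γ Δ : Multiset Fml} {φ : Fml} :
        NFloc (G ++ [(Γ, φ ::ₘ Δ)]) → NFloc (G ++ [(Fml.neg φ ::ₘ Γ, Δ)])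
    | negR {G : LNS} {Γ Δ : Multiset Fml} {φ : Fml} :
        NFloc (G ++ [(φ ::ₘ Γ, Δ)]) → NFloc (G ++ [(Γ, Fml.neg φ ::ₘ Δ)])
    | orL {G : LNS} {Γ Δ : Multiset Fml} {φ ψ : Fml} :
        NFloc (G ++ [(φ ::ₘ Γ, Δ)]) → NFloc (G ++ [(ψ ::ₘ Γ, Δ)]) →
        NFloc (G ++ [(Fml.or φ ψ ::ₘ Γ, Δ)])
    | orR {G : LNS} {Γ Δ : Multiset Fml} {φ ψ : Fml} :
        NFloc (G ++ [(Γ, φ ::ₘ ψ ::ₘ Δ)]) → NFloc (G ++ [(Γ, Fml.or φ ψ ::ₘ Δ)])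

  /-- Conclusions of blocks of □L rules above local blocks. -/
  inductive NFboxL : LNS → Prop
    | base {S : LNS} : NFloc S → NFboxL S
    | boxL {G : LNS} {Γ Δ Ξ Ω : Multiset Fml} {φ : Fml} :
        NFboxL (G ++ [(Fml.box φ ::ₘ Γ, Δ), (φ ::ₘ Ξ, Ω)]) →
        NFboxL (G ++ [(Fml.box φ ::ₘ Γ, Δ), (Ξ, Ω)])

  /-- Conclusions of blocks of 4L rules above □L blocks; `NF4 S` expresses
  that S has a normal form proof in LNGL. -/
  inductive NF4 : LNS → Prop
    | base {S : LNS} : NFboxL S → NF4 S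
    | fourL {G : LNS} {Γ Δ Ξ Ω : Multiset Fml} {φ : Fml} :
        NF4 (G ++ [(Fml.box φ ::ₘ Γ, Δ), (Fml.box φ ::ₘ Ξ, Ω)]) →
        NF4 (G ++ [(Fml.box φ ::ₘ Γ, Δ), (Ξ, Ω)])
end

namespace LNGLNorm

/-- Staged normal-form calculus: level 0 = NFR, 1 = NFloc, 2 = NFboxL, ≥3 = NF4.
Conclusions may be formed at any admissible level. -/
inductive NF : ℕ → LNS → Prop
  | id1 (k : ℕ) (G : LNS) (Γ Δ : Multiset Fml) (p : ℕ) :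
      NF k (G ++ [(Fml.atom p ::ₘ Γ, Fml.atom p ::ₘ Δ)])
  | id2 (k : ℕ) (G : LNS) (Γ Δ : Multiset Fml) (φ : Fml) :
      NF k (G ++ [(Fml.box φ ::ₘ Γ, Fml.box φ ::ₘ Δ)])
  | boxR {G : LNS} {Γ Δ : Multiset Fml} {φ : Fml} (k : ℕ) :
      NF 3 (G ++ [(Γ, Δ), ({Fml.box φ}, {φ})]) → NF k (G ++ [(Γ, Fml.box φ ::ₘ Δ)])
  | negL {G : LNS} {Γ Δ : Multiset Fml} {φ : Fml} (k : ℕ) :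
      NF 1 (G ++ [(Γ, φ ::ₘ Δ)]) → NF (k + 1) (G ++ [(Fml.neg φ ::ₘ Γ, Δ)])
  | negR {G : LNS} {Γ Δ : Multiset Fml} {φ : Fml} (k : ℕ) :
      NF 1 (G ++ [(φ ::ₘ Γ, Δ)]) → NF (k + 1) (G ++ [(Γ, Fml.neg φ ::ₘ Δ)])
  | orL {G : LNS} {Γ Δ : Multiset Fml} {φ ψ : Fml} (k : ℕ) :
      NF 1 (G ++ [(φ ::ₘ Γ, Δ)]) → NF 1 (G ++ [(ψ ::ₘ Γ, Δ)]) →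
      NF (k + 1) (G ++ [(Fml.or φ ψ ::ₘ Γ, Δ)])
  | orR {G : LNS} {Γ Δ : Multiset Fml} {φ ψ : Fml} (k : ℕ) :
      NF 1 (G ++ [(Γ, φ ::ₘ ψ ::ₘ Δ)]) → NF (k + 1) (G ++ [(Γ, Fml.or φ ψ ::ₘ Δ)])
  | boxL {G : LNS} {Γ Δ Ξ Ω : Multiset Fml} {φ : Fml} (k : ℕ) :
      NF 2 (G ++ [(Fml.box φ ::ₘ Γ, Δ), (φ ::ₘ Ξ, Ω)]) →
      NF (k + 2) (G ++ [(Fml.box φ ::ₘ Γ, Δ), (Ξ, Ω)])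
  | fourL {G : LNS} {Γ Δ Ξ Ω : Multiset Fml} {φ : Fml} (k : ℕ) :
      NF 3 (G ++ [(Fml.box φ ::ₘ Γ, Δ), (Fml.box φ ::ₘ Ξ, Ω)]) →
      NF (k + 3) (G ++ [(Fml.box φ ::ₘ Γ, Δ), (Ξ, Ω)])

/- List equation helpers. -/
lemma list_eq1 {α : Type*} {G1 G2 : List α} {a b : α} (h : G1 ++ [a] = G2 ++ [b]) :
    G1 = G2 ∧ a = b := by
  have := List.append_inj' h rfl
  simpa using this

lemma list_eq2 {α : Type*} {G1 G2 : List α} {a b c d : α} (h : G1 ++ [a, b] = G2 ++ [c, d]) :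
    G1 = G2 ∧ a = c ∧ b = d := by
  have := List.append_inj' h rfl
  simpa using this

lemma list_eq21 {α : Type*} {G1 G2 : List α} {a b c : α} (h : G1 ++ [a, b] = G2 ++ [c]) :
    G2 = G1 ++ [a] ∧ b = c := by
  have h' : (G1 ++ [a]) ++ [b] = G2 ++ [c] := by simpa using h
  obtain ⟨e1, e2⟩ := list_eq1 h'
  exact ⟨e1.symm, e2⟩

/- Multiset helpers. -/
lemma cons_le_ex {a : Fml} {s t : Multiset Fml} (h : a ::ₘ s ≤ t) :
    ∃ u, t = a ::ₘ u ∧ s ≤ u := by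
  have ha : a ∈ t := Multiset.mem_of_le h (Multiset.mem_cons_self a s)
  refine ⟨t.erase a, (Multiset.cons_erase ha).symm, ?_⟩
  rw [← Multiset.cons_erase ha] at h
  exact (Multiset.cons_le_cons_iff a).mp h

/-- Componentwise weakening relation on linear nested sequents. -/
def W (a b : Multiset Fml × Multiset Fml) : Prop := a.1 ≤ b.1 ∧ a.2 ≤ b.2

lemma W_refl : ∀ a, W a a := fun _ => ⟨le_refl _, le_refl _⟩

lemma f2_refl (G : LNS) : List.Forall₂ W G G := List.forall₂_same.mpr (fun a _ => W_refl a)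

lemma f2_last {G : LNS} {a : Multiset Fml × Multiset Fml} {T : LNS}
    (h : List.Forall₂ W (G ++ [a]) T) :
    ∃ G' b, T = G' ++ [b] ∧ List.Forall₂ W G G' ∧ W a b := by
  induction G generalizing T with
  | nil =>
    rcases h with _ | ⟨hab, hnil⟩
    rcases hnil
    exact ⟨[], _, rfl, List.Forall₂.nil, hab⟩
  | cons x G ih =>
    rcases h with _ | ⟨hxy, htl⟩
    obtain ⟨G', b, rfl, hf, hab⟩ := ih htl
    exact ⟨_ :: G', b, rfl, List.Forall₂.cons hxy hf, hab⟩

lemma f2_last2 {G : LNS} {a b : Multiset Fml × Multiset Fml} {T : LNS}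
    (h : List.Forall₂ W (G ++ [a, b]) T) :
    ∃ G' a' b', T = G' ++ [a', b'] ∧ List.Forall₂ W G G' ∧ W a a' ∧ W b b' := by
  have h' : List.Forall₂ W ((G ++ [a]) ++ [b]) T := by simpa using h
  obtain ⟨G1, b', rfl, hf, hbb⟩ := f2_last h'
  obtain ⟨G', a', rfl, hf2, haa⟩ := f2_last hf
  exact ⟨G', a', b', by simp, hf2, haa, hbb⟩

lemma f2_app {G G' : LNS} {r r' : LNS} (h : List.Forall₂ W G G') (h2 : List.Forall₂ W r r') :
    List.Forall₂ W (G ++ r) (G' ++ r') := List.rel_append h h2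

/-- Weakening is admissible in `NF`, preserving the level. -/
lemma wk_adm : ∀ {k S}, NF k S → ∀ T, List.Forall₂ W S T → NF k T := by
  intro k S h
  induction h with
  | id1 k G Γ Δ p =>
    intro T hT
    obtain ⟨G', b, rfl, _, hW⟩ := f2_last hT
    obtain ⟨A, B⟩ := b
    obtain ⟨h1, h2⟩ := hW
    obtain ⟨A', rfl, _⟩ := cons_le_ex h1
    obtain ⟨B', rfl, _⟩ := cons_le_ex h2
    exact NF.id1 k G' A' B' p
  | id2 k G Γ Δ φ =>
    intro T hT
    obtain ⟨G', b, rfl, _, hW⟩ := f2_last hT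
    obtain ⟨A, B⟩ := b
    obtain ⟨h1, h2⟩ := hW
    obtain ⟨A', rfl, _⟩ := cons_le_ex h1
    obtain ⟨B', rfl, _⟩ := cons_le_ex h2
    exact NF.id2 k G' A' B' φ
  | boxR k h ih =>
    intro T hT
    obtain ⟨G', b, rfl, hf, hW⟩ := f2_last hT
    obtain ⟨A, B⟩ := b
    obtain ⟨h1, h2⟩ := hW
    obtain ⟨B', rfl, hB⟩ := cons_le_ex h2
    refine NF.boxR k (ih _ ?_)
    exact f2_app hf (List.Forall₂.cons ⟨h1, hB⟩
      (List.Forall₂.cons (W_refl _) List.Forall₂.nil))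
  | negL k h ih =>
    intro T hT
    obtain ⟨G', b, rfl, hf, hW⟩ := f2_last hT
    obtain ⟨A, B⟩ := b
    obtain ⟨h1, h2⟩ := hW
    obtain ⟨A', rfl, hA⟩ := cons_le_ex h1
    refine NF.negL k (ih _ ?_)
    exact f2_app hf (List.Forall₂.cons ⟨hA, Multiset.cons_le_cons _ h2⟩ List.Forall₂.nil)
  | negR k h ih =>
    intro T hT
    obtain ⟨G', b, rfl, hf, hW⟩ := f2_last hT
    obtain ⟨A, B⟩ := b
    obtain ⟨h1, h2⟩ := hW
    obtain ⟨B', rfl, hB⟩ := cons_le_ex h2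
    refine NF.negR k (ih _ ?_)
    exact f2_app hf (List.Forall₂.cons ⟨Multiset.cons_le_cons _ h1, hB⟩ List.Forall₂.nil)
  | orL k h1' h2' ih1 ih2 =>
    intro T hT
    obtain ⟨G', b, rfl, hf, hW⟩ := f2_last hT
    obtain ⟨A, B⟩ := b
    obtain ⟨h1, h2⟩ := hW
    obtain ⟨A', rfl, hA⟩ := cons_le_ex h1
    refine NF.orL k (ih1 _ ?_) (ih2 _ ?_)
    · exact f2_app hf (List.Forall₂.cons ⟨Multiset.cons_le_cons _ hA, h2⟩ List.Forall₂.nil)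
    · exact f2_app hf (List.Forall₂.cons ⟨Multiset.cons_le_cons _ hA, h2⟩ List.Forall₂.nil)
  | orR k h ih =>
    intro T hT
    obtain ⟨G', b, rfl, hf, hW⟩ := f2_last hT
    obtain ⟨A, B⟩ := b
    obtain ⟨h1, h2⟩ := hW
    obtain ⟨B', rfl, hB⟩ := cons_le_ex h2
    refine NF.orR k (ih _ ?_)
    exact f2_app hf (List.Forall₂.cons
      ⟨h1, Multiset.cons_le_cons _ (Multiset.cons_le_cons _ hB)⟩ List.Forall₂.nil)
  | boxL k h ih =>
    intro T hT
    obtain ⟨G', a', b', rfl, hf, hWa, hWb⟩ := f2_last2 hT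
    obtain ⟨A, B⟩ := a'
    obtain ⟨C, D⟩ := b'
    obtain ⟨h1, h2⟩ := hWa
    obtain ⟨h3, h4⟩ := hWb
    obtain ⟨A', rfl, hA⟩ := cons_le_ex h1
    refine NF.boxL k (ih _ ?_)
    exact f2_app hf (List.Forall₂.cons ⟨Multiset.cons_le_cons _ hA, h2⟩
      (List.Forall₂.cons ⟨Multiset.cons_le_cons _ h3, h4⟩ List.Forall₂.nil))
  | fourL k h ih =>
    intro T hT
    obtain ⟨G', a', b', rfl, hf, hWa, hWb⟩ := f2_last2 hT
    obtain ⟨A, B⟩ := a'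
    obtain ⟨C, D⟩ := b'
    obtain ⟨h1, h2⟩ := hWa
    obtain ⟨h3, h4⟩ := hWb
    obtain ⟨A', rfl, hA⟩ := cons_le_ex h1
    refine NF.fourL k (ih _ ?_)
    exact f2_app hf (List.Forall₂.cons ⟨Multiset.cons_le_cons _ hA, h2⟩
      (List.Forall₂.cons ⟨Multiset.cons_le_cons _ h3, h4⟩ List.Forall₂.nil))

lemma app2 (G : LNS) (a b : Multiset Fml × Multiset Fml) :
    G ++ [a, b] = (G ++ [a]) ++ [b] := by simp

/-- □L is admissible on top of level-3 derivations. -/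
lemma boxL_adm : ∀ {k S}, NF k S → ∀ G (Γ Δ Ξ Ω : Multiset Fml) (φ : Fml),
    S = G ++ [(Γ, Δ), (φ ::ₘ Ξ, Ω)] → Fml.box φ ∈ Γ → NF 3 (G ++ [(Γ, Δ), (Ξ, Ω)]) := by
  have fin : ∀ (G : LNS) (Γ Δ Ξ Ω : Multiset Fml) (φ : Fml),
      Fml.box φ ∈ Γ → NF 2 (G ++ [(Γ, Δ), (φ ::ₘ Ξ, Ω)]) → NF 3 (G ++ [(Γ, Δ), (Ξ, Ω)]) := by
    intro G Γ Δ Ξ Ω φ hm h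
    obtain ⟨Γ', rfl⟩ := Multiset.exists_cons_of_mem hm
    exact NF.boxL 1 h
  intro k S h
  induction h with
  | id1 k G0 Γ0 Δ0 p =>
    intro G Γ Δ Ξ Ω φ hS hm
    exact fin _ _ _ _ _ _ hm (hS ▸ NF.id1 2 G0 Γ0 Δ0 p)
  | id2 k G0 Γ0 Δ0 χ =>
    intro G Γ Δ Ξ Ω φ hS hm
    exact fin _ _ _ _ _ _ hm (hS ▸ NF.id2 2 G0 Γ0 Δ0 χ)
  | boxR k h _ =>
    intro G Γ Δ Ξ Ω φ hS hm
    exact fin _ _ _ _ _ _ hm (hS ▸ NF.boxR 2 h)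
  | negL k h _ =>
    intro G Γ Δ Ξ Ω φ hS hm
    exact fin _ _ _ _ _ _ hm (hS ▸ NF.negL 1 h)
  | negR k h _ =>
    intro G Γ Δ Ξ Ω φ hS hm
    exact fin _ _ _ _ _ _ hm (hS ▸ NF.negR 1 h)
  | orL k h1 h2 _ _ =>
    intro G Γ Δ Ξ Ω φ hS hm
    exact fin _ _ _ _ _ _ hm (hS ▸ NF.orL 1 h1 h2)
  | orR k h _ =>
    intro G Γ Δ Ξ Ω φ hS hm
    exact fin _ _ _ _ _ _ hm (hS ▸ NF.orR 1 h)
  | boxL k h _ =>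
    intro G Γ Δ Ξ Ω φ hS hm
    exact fin _ _ _ _ _ _ hm (hS ▸ NF.boxL 0 h)
  | fourL k h ih =>
    rename_i G0 Γ0 Δ0 Ξ0 Ω0 χ
    intro G Γ Δ Ξ Ω φ hS hm
    obtain ⟨rfl, h1, h2⟩ := list_eq2 hS
    injection h1 with e1 e2
    injection h2 with e3 e4
    subst e1; subst e2; subst e3; subst e4
    have h5 := ih G0 (Fml.box χ ::ₘ Γ0) Δ0 (Fml.box χ ::ₘ Ξ) Ω0 φ
      (by rw [Multiset.cons_swap]) hm
    exact NF.fourL 0 h5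

/-- ¬L is admissible on top of level-3 derivations. -/
lemma negL_adm : ∀ {k S}, NF k S → ∀ G (Γ Δ : Multiset Fml) (φ : Fml),
    S = G ++ [(Γ, φ ::ₘ Δ)] → NF 3 (G ++ [(Fml.neg φ ::ₘ Γ, Δ)]) := by
  intro k S h
  induction h with
  | id1 k G0 Γ0 Δ0 p =>
    intro G Γ Δ φ hS
    exact NF.negL 2 (hS ▸ NF.id1 1 G0 Γ0 Δ0 p)
  | id2 k G0 Γ0 Δ0 χ =>
    intro G Γ Δ φ hS
    exact NF.negL 2 (hS ▸ NF.id2 1 G0 Γ0 Δ0 χ)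
  | boxR k h _ =>
    intro G Γ Δ φ hS
    exact NF.negL 2 (hS ▸ NF.boxR 1 h)
  | negL k h _ =>
    intro G Γ Δ φ hS
    exact NF.negL 2 (hS ▸ NF.negL 0 h)
  | negR k h _ =>
    intro G Γ Δ φ hS
    exact NF.negL 2 (hS ▸ NF.negR 0 h)
  | orL k h1 h2 _ _ =>
    intro G Γ Δ φ hS
    exact NF.negL 2 (hS ▸ NF.orL 0 h1 h2)
  | orR k h _ =>
    intro G Γ Δ φ hS
    exact NF.negL 2 (hS ▸ NF.orR 0 h)
  | boxL k h ih =>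
    rename_i G0 Γ0 Δ0 Ξ0 Ω0 χ
    intro G Γ Δ φ hS
    obtain ⟨hG, h2⟩ := list_eq21 hS
    injection h2 with e3 e4
    subst hG; subst e3; subst e4
    have h5 := ih (G0 ++ [(Fml.box χ ::ₘ Γ0, Δ0)]) (χ ::ₘ Ξ0) Δ φ (app2 ..)
    have h6 := boxL_adm h5 G0 (Fml.box χ ::ₘ Γ0) Δ0 (Fml.neg φ ::ₘ Ξ0) Δ χ
      (by rw [← app2, Multiset.cons_swap]) (Multiset.mem_cons_self _ _)
    exact (app2 ..) ▸ h6
  | fourL k h ih =>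
    rename_i G0 Γ0 Δ0 Ξ0 Ω0 χ
    intro G Γ Δ φ hS
    obtain ⟨hG, h2⟩ := list_eq21 hS
    injection h2 with e3 e4
    subst hG; subst e3; subst e4
    have h5 := ih (G0 ++ [(Fml.box χ ::ₘ Γ0, Δ0)]) (Fml.box χ ::ₘ Ξ0) Δ φ (app2 ..)
    have h6 : NF 3 (G0 ++ [(Fml.box χ ::ₘ Γ0, Δ0),
        (Fml.box χ ::ₘ Fml.neg φ ::ₘ Ξ0, Δ)]) := by
      rw [app2, Multiset.cons_swap]; exact h5
    exact (app2 ..) ▸ NF.fourL 0 h6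

/-- ¬R is admissible on top of level-3 derivations. -/
lemma negR_adm : ∀ {k S}, NF k S → ∀ G (Γ Δ : Multiset Fml) (φ : Fml),
    S = G ++ [(φ ::ₘ Γ, Δ)] → NF 3 (G ++ [(Γ, Fml.neg φ ::ₘ Δ)]) := by
  intro k S h
  induction h with
  | id1 k G0 Γ0 Δ0 p =>
    intro G Γ Δ φ hS
    exact NF.negR 2 (hS ▸ NF.id1 1 G0 Γ0 Δ0 p)
  | id2 k G0 Γ0 Δ0 χ =>
    intro G Γ Δ φ hS
    exact NF.negR 2 (hS ▸ NF.id2 1 G0 Γ0 Δ0 χ)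
  | boxR k h _ =>
    intro G Γ Δ φ hS
    exact NF.negR 2 (hS ▸ NF.boxR 1 h)
  | negL k h _ =>
    intro G Γ Δ φ hS
    exact NF.negR 2 (hS ▸ NF.negL 0 h)
  | negR k h _ =>
    intro G Γ Δ φ hS
    exact NF.negR 2 (hS ▸ NF.negR 0 h)
  | orL k h1 h2 _ _ =>
    intro G Γ Δ φ hS
    exact NF.negR 2 (hS ▸ NF.orL 0 h1 h2)
  | orR k h _ =>
    intro G Γ Δ φ hS
    exact NF.negR 2 (hS ▸ NF.orR 0 h)
  | boxL k h ih =>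
    rename_i G0 Γ0 Δ0 Ξ0 Ω0 χ
    intro G Γ Δ φ hS
    obtain ⟨hG, h2⟩ := list_eq21 hS
    injection h2 with e3 e4
    subst hG; subst e3; subst e4
    have h5 := ih (G0 ++ [(Fml.box χ ::ₘ Γ0, Δ0)]) (χ ::ₘ Γ) Ω0 φ
      (by rw [← app2, Multiset.cons_swap])
    have h6 := boxL_adm h5 G0 (Fml.box χ ::ₘ Γ0) Δ0 Γ (Fml.neg φ ::ₘ Ω0) χ
      (by rw [← app2]) (Multiset.mem_cons_self _ _)
    exact (app2 ..) ▸ h6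
  | fourL k h ih =>
    rename_i G0 Γ0 Δ0 Ξ0 Ω0 χ
    intro G Γ Δ φ hS
    obtain ⟨hG, h2⟩ := list_eq21 hS
    injection h2 with e3 e4
    subst hG; subst e3; subst e4
    have h5 := ih (G0 ++ [(Fml.box χ ::ₘ Γ0, Δ0)]) (Fml.box χ ::ₘ Γ) Ω0 φ
      (by rw [← app2, Multiset.cons_swap])
    have h6 : NF 3 (G0 ++ [(Fml.box χ ::ₘ Γ0, Δ0),
        (Fml.box χ ::ₘ Γ, Fml.neg φ ::ₘ Ω0)]) := by
      rw [app2]; exact h5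
    exact (app2 ..) ▸ NF.fourL 0 h6

/-- ∨R is admissible on top of level-3 derivations. -/
lemma orR_adm : ∀ {k S}, NF k S → ∀ G (Γ Δ : Multiset Fml) (φ ψ : Fml),
    S = G ++ [(Γ, φ ::ₘ ψ ::ₘ Δ)] → NF 3 (G ++ [(Γ, Fml.or φ ψ ::ₘ Δ)]) := by
  intro k S h
  induction h with
  | id1 k G0 Γ0 Δ0 p =>
    intro G Γ Δ φ ψ hS
    exact NF.orR 2 (hS ▸ NF.id1 1 G0 Γ0 Δ0 p)
  | id2 k G0 Γ0 Δ0 χ =>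
    intro G Γ Δ φ ψ hS
    exact NF.orR 2 (hS ▸ NF.id2 1 G0 Γ0 Δ0 χ)
  | boxR k h _ =>
    intro G Γ Δ φ ψ hS
    exact NF.orR 2 (hS ▸ NF.boxR 1 h)
  | negL k h _ =>
    intro G Γ Δ φ ψ hS
    exact NF.orR 2 (hS ▸ NF.negL 0 h)
  | negR k h _ =>
    intro G Γ Δ φ ψ hS
    exact NF.orR 2 (hS ▸ NF.negR 0 h)
  | orL k h1 h2 _ _ =>
    intro G Γ Δ φ ψ hS
    exact NF.orR 2 (hS ▸ NF.orL 0 h1 h2)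
  | orR k h _ =>
    intro G Γ Δ φ ψ hS
    exact NF.orR 2 (hS ▸ NF.orR 0 h)
  | boxL k h ih =>
    rename_i G0 Γ0 Δ0 Ξ0 Ω0 χ
    intro G Γ Δ φ ψ hS
    obtain ⟨hG, h2⟩ := list_eq21 hS
    injection h2 with e3 e4
    subst hG; subst e3; subst e4
    have h5 := ih (G0 ++ [(Fml.box χ ::ₘ Γ0, Δ0)]) (χ ::ₘ Ξ0) Δ φ ψ (app2 ..)
    have h6 := boxL_adm h5 G0 (Fml.box χ ::ₘ Γ0) Δ0 Ξ0 (Fml.or φ ψ ::ₘ Δ) χ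
      (by rw [← app2]) (Multiset.mem_cons_self _ _)
    exact (app2 ..) ▸ h6
  | fourL k h ih =>
    rename_i G0 Γ0 Δ0 Ξ0 Ω0 χ
    intro G Γ Δ φ ψ hS
    obtain ⟨hG, h2⟩ := list_eq21 hS
    injection h2 with e3 e4
    subst hG; subst e3; subst e4
    have h5 := ih (G0 ++ [(Fml.box χ ::ₘ Γ0, Δ0)]) (Fml.box χ ::ₘ Ξ0) Δ φ ψ (app2 ..)
    have h6 : NF 3 (G0 ++ [(Fml.box χ ::ₘ Γ0, Δ0),
        (Fml.box χ ::ₘ Ξ0, Fml.or φ ψ ::ₘ Δ)]) := by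
      rw [app2]; exact h5
    exact (app2 ..) ▸ NF.fourL 0 h6

/-- Weaken a derivation by adding a formula to the antecedent of the
last component. -/
lemma wk_last {G : LNS} {Γ Δ : Multiset Fml} (χ : Fml) {k : ℕ}
    (h : NF k (G ++ [(Γ, Δ)])) : NF k (G ++ [(χ ::ₘ Γ, Δ)]) := by
  refine wk_adm h _ (f2_app (f2_refl G) ?_)
  exact List.Forall₂.cons ⟨Multiset.le_cons_self _ _, le_refl _⟩ List.Forall₂.nil

/-- ∨L is admissible (pushing into the second premise) when the first
premise is a level-1 derivation. -/
lemma orL_push : ∀ {m S2}, NF m S2 → ∀ G (Γ Δ : Multiset Fml) (φ ψ : Fml),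
    S2 = G ++ [(ψ ::ₘ Γ, Δ)] → NF 1 (G ++ [(φ ::ₘ Γ, Δ)]) →
    NF 3 (G ++ [(Fml.or φ ψ ::ₘ Γ, Δ)]) := by
  intro m S2 h
  induction h with
  | id1 k G0 Γ0 Δ0 p =>
    intro G Γ Δ φ ψ hS hD1
    exact NF.orL 2 hD1 (hS ▸ NF.id1 1 G0 Γ0 Δ0 p)
  | id2 k G0 Γ0 Δ0 χ =>
    intro G Γ Δ φ ψ hS hD1
    exact NF.orL 2 hD1 (hS ▸ NF.id2 1 G0 Γ0 Δ0 χ)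
  | boxR k h _ =>
    intro G Γ Δ φ ψ hS hD1
    exact NF.orL 2 hD1 (hS ▸ NF.boxR 1 h)
  | negL k h _ =>
    intro G Γ Δ φ ψ hS hD1
    exact NF.orL 2 hD1 (hS ▸ NF.negL 0 h)
  | negR k h _ =>
    intro G Γ Δ φ ψ hS hD1
    exact NF.orL 2 hD1 (hS ▸ NF.negR 0 h)
  | orL k h1 h2 _ _ =>
    intro G Γ Δ φ ψ hS hD1
    exact NF.orL 2 hD1 (hS ▸ NF.orL 0 h1 h2)
  | orR k h _ =>
    intro G Γ Δ φ ψ hS hD1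
    exact NF.orL 2 hD1 (hS ▸ NF.orR 0 h)
  | boxL k h ih =>
    rename_i G0 Γ0 Δ0 Ξ0 Ω0 χ
    intro G Γ Δ φ ψ hS hD1
    obtain ⟨hG, h2⟩ := list_eq21 hS
    injection h2 with e3 e4
    subst hG; subst e3; subst e4
    have hD1' : NF 1 ((G0 ++ [(Fml.box χ ::ₘ Γ0, Δ0)]) ++ [(φ ::ₘ χ ::ₘ Γ, Ω0)]) := by
      rw [Multiset.cons_swap]; exact wk_last χ hD1
    have h5 := ih (G0 ++ [(Fml.box χ ::ₘ Γ0, Δ0)]) (χ ::ₘ Γ) Ω0 φ ψ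
      (by rw [← app2, Multiset.cons_swap]) hD1'
    have h6 := boxL_adm h5 G0 (Fml.box χ ::ₘ Γ0) Δ0 (Fml.or φ ψ ::ₘ Γ) Ω0 χ
      (by rw [← app2, Multiset.cons_swap]) (Multiset.mem_cons_self _ _)
    exact (app2 ..) ▸ h6
  | fourL k h ih =>
    rename_i G0 Γ0 Δ0 Ξ0 Ω0 χ
    intro G Γ Δ φ ψ hS hD1
    obtain ⟨hG, h2⟩ := list_eq21 hS
    injection h2 with e3 e4
    subst hG; subst e3; subst e4
    have hD1' : NF 1 ((G0 ++ [(Fml.box χ ::ₘ Γ0, Δ0)]) ++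
        [(φ ::ₘ Fml.box χ ::ₘ Γ, Ω0)]) := by
      rw [Multiset.cons_swap]; exact wk_last (Fml.box χ) hD1
    have h5 := ih (G0 ++ [(Fml.box χ ::ₘ Γ0, Δ0)]) (Fml.box χ ::ₘ Γ) Ω0 φ ψ
      (by rw [← app2, Multiset.cons_swap]) hD1'
    have h6 : NF 3 (G0 ++ [(Fml.box χ ::ₘ Γ0, Δ0),
        (Fml.box χ ::ₘ Fml.or φ ψ ::ₘ Γ, Ω0)]) := by
      rw [app2, Multiset.cons_swap]; exact h5
    exact (app2 ..) ▸ NF.fourL 0 h6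

/-- ∨L is admissible on top of level-3 derivations. -/
lemma orL_adm : ∀ {k S1}, NF k S1 → ∀ G (Γ Δ : Multiset Fml) (φ ψ : Fml),
    S1 = G ++ [(φ ::ₘ Γ, Δ)] → NF 3 (G ++ [(ψ ::ₘ Γ, Δ)]) →
    NF 3 (G ++ [(Fml.or φ ψ ::ₘ Γ, Δ)]) := by
  intro k S1 h
  induction h with
  | id1 k G0 Γ0 Δ0 p =>
    intro G Γ Δ φ ψ hS hD2
    exact orL_push hD2 _ _ _ _ _ rfl (hS ▸ NF.id1 1 G0 Γ0 Δ0 p)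
  | id2 k G0 Γ0 Δ0 χ =>
    intro G Γ Δ φ ψ hS hD2
    exact orL_push hD2 _ _ _ _ _ rfl (hS ▸ NF.id2 1 G0 Γ0 Δ0 χ)
  | boxR k h _ =>
    intro G Γ Δ φ ψ hS hD2
    exact orL_push hD2 _ _ _ _ _ rfl (hS ▸ NF.boxR 1 h)
  | negL k h _ =>
    intro G Γ Δ φ ψ hS hD2
    exact orL_push hD2 _ _ _ _ _ rfl (hS ▸ NF.negL 0 h)
  | negR k h _ =>
    intro G Γ Δ φ ψ hS hD2
    exact orL_push hD2 _ _ _ _ _ rfl (hS ▸ NF.negR 0 h)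
  | orL k h1 h2 _ _ =>
    intro G Γ Δ φ ψ hS hD2
    exact orL_push hD2 _ _ _ _ _ rfl (hS ▸ NF.orL 0 h1 h2)
  | orR k h _ =>
    intro G Γ Δ φ ψ hS hD2
    exact orL_push hD2 _ _ _ _ _ rfl (hS ▸ NF.orR 0 h)
  | boxL k h ih =>
    rename_i G0 Γ0 Δ0 Ξ0 Ω0 χ
    intro G Γ Δ φ ψ hS hD2
    obtain ⟨hG, h2⟩ := list_eq21 hS
    injection h2 with e3 e4
    subst hG; subst e3; subst e4
    have hD2' : NF 3 ((G0 ++ [(Fml.box χ ::ₘ Γ0, Δ0)]) ++ [(ψ ::ₘ χ ::ₘ Γ, Ω0)]) := by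
      rw [Multiset.cons_swap]; exact wk_last χ hD2
    have h5 := ih (G0 ++ [(Fml.box χ ::ₘ Γ0, Δ0)]) (χ ::ₘ Γ) Ω0 φ ψ
      (by rw [← app2, Multiset.cons_swap]) hD2'
    have h6 := boxL_adm h5 G0 (Fml.box χ ::ₘ Γ0) Δ0 (Fml.or φ ψ ::ₘ Γ) Ω0 χ
      (by rw [← app2, Multiset.cons_swap]) (Multiset.mem_cons_self _ _)
    exact (app2 ..) ▸ h6
  | fourL k h ih =>
    rename_i G0 Γ0 Δ0 Ξ0 Ω0 χ
    intro G Γ Δ φ ψ hS hD2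
    obtain ⟨hG, h2⟩ := list_eq21 hS
    injection h2 with e3 e4
    subst hG; subst e3; subst e4
    have hD2' : NF 3 ((G0 ++ [(Fml.box χ ::ₘ Γ0, Δ0)]) ++
        [(ψ ::ₘ Fml.box χ ::ₘ Γ, Ω0)]) := by
      rw [Multiset.cons_swap]; exact wk_last (Fml.box χ) hD2
    have h5 := ih (G0 ++ [(Fml.box χ ::ₘ Γ0, Δ0)]) (Fml.box χ ::ₘ Γ) Ω0 φ ψ
      (by rw [← app2, Multiset.cons_swap]) hD2'
    have h6 : NF 3 (G0 ++ [(Fml.box χ ::ₘ Γ0, Δ0),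
        (Fml.box χ ::ₘ Fml.or φ ψ ::ₘ Γ, Ω0)]) := by
      rw [app2, Multiset.cons_swap]; exact h5
    exact (app2 ..) ▸ NF.fourL 0 h6

/-- Every LNGL derivation yields a level-3 normal-form derivation. -/
lemma main : ∀ {n S}, LNGL n S → NF 3 S := by
  intro n S h
  induction h with
  | id1 n G Γ Δ p => exact NF.id1 3 G Γ Δ p
  | id2 n G Γ Δ φ => exact NF.id2 3 G Γ Δ φ
  | negL h ih => exact negL_adm ih _ _ _ _ rfl
  | negR h ih => exact negR_adm ih _ _ _ _ rfl
  | orL h1 h2 ih1 ih2 => exact orL_adm ih1 _ _ _ _ _ rfl ih2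
  | orR h ih => exact orR_adm ih _ _ _ _ _ rfl
  | fourL h ih => exact NF.fourL 0 ih
  | boxL h ih => exact boxL_adm ih _ _ _ _ _ _ rfl (Multiset.mem_cons_self _ _)
  | boxR h ih => exact NF.boxR 3 ih

/-- Interpretation of staged levels into the mutual normal-form predicates. -/
def Tg : ℕ → LNS → Prop
  | 0, S => NFR S
  | 1, S => NFloc S
  | 2, S => NFboxL S
  | _ + 3, S => NF4 S

lemma tg_of_NFR {S : LNS} (h : NFR S) : ∀ k, Tg k S
  | 0 => h
  | 1 => NFloc.base h
  | 2 => NFboxL.base (NFloc.base h)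
  | _ + 3 => NF4.base (NFboxL.base (NFloc.base h))

lemma tg_of_loc {S : LNS} (h : NFloc S) : ∀ k, Tg (k + 1) S
  | 0 => h
  | 1 => NFboxL.base h
  | _ + 2 => NF4.base (NFboxL.base h)

lemma tg_of_boxL {S : LNS} (h : NFboxL S) : ∀ k, Tg (k + 2) S
  | 0 => h
  | _ + 1 => NF4.base h

lemma toTg : ∀ {k S}, NF k S → Tg k S := by
  intro k S h
  induction h with
  | id1 k G Γ Δ p => exact tg_of_NFR (NFR.id1 G Γ Δ p) k
  | id2 k G Γ Δ φ => exact tg_of_NFR (NFR.id2 G Γ Δ φ) k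
  | boxR k _ ih => exact tg_of_NFR (NFR.boxR ih) k
  | negL k _ ih => exact tg_of_loc (NFloc.negL ih) k
  | negR k _ ih => exact tg_of_loc (NFloc.negR ih) k
  | orL k _ _ ih1 ih2 => exact tg_of_loc (NFloc.orL ih1 ih2) k
  | orR k _ ih => exact tg_of_loc (NFloc.orR ih) k
  | boxL k _ ih => exact tg_of_boxL (NFboxL.boxL ih) k
  | fourL k _ ih => exact NF4.fourL ih

end LNGLNorm

/-- Every proof in LNGL can be transformed into a normal form proof of the
same linear nested sequent. -/
theorem lngl_normalization (G : LNS) (hp : ∃ n, LNGL n G) : NF4 G := by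
  obtain ⟨n, h⟩ := hp
  exact LNGLNorm.toTg (LNGLNorm.main h)
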